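/- Let p_(j) be the j-th order statistic of n > 2 independent Uniform(0,1) random variables with 2 ≤ j ≤ n, and K(x,t) = x log(x/t) + (1−x) log((1−x)/(1−t)). Then for every s > 0, P(n·K(j/n, p_(j)) > s) ≤ e·sqrt(2)·j·e^{−(1−1/j)s}. -/

import Mathlib

open MeasureTheory ProbabilityTheory Finset

/-!
Write `x = j / n`. Since `K(x, ·)` decreases on `(0, x]` and increases on `[x, 1)`, there are
`a < x < b` with `n K(x, a) = n K(x, b) = s`, and the event `n K(x, p₍ⱼ₎) > s` forces
`p₍ⱼ₎ ≤ a` or `p₍ⱼ₎ > b`: at least `j` of the `U i` are `≤ a`, or fewer than `j` of them are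
`≤ b`. These are tails of binomial counts, and the Chernoff bound at the optimal parameter bounds
each by `exp (-n K(x, a)) = exp (-n K(x, b)) = exp (-s)`; finally `2 exp (-s)` is below the
claimed bound.
-/

noncomputable def bernoulliKL (x t : ℝ) : ℝ :=
  x * Real.log (x / t) + (1 - x) * Real.log ((1 - x) / (1 - t))

section BernoulliKL

open Real

variable {x t : ℝ}

lemma mul_log_div_eq_sub (a : ℝ) {b : ℝ} (hb : b ≠ 0) :
    a * log (a / b) = a * log a - a * log b := by
  rcases eq_or_ne a 0 with rfl | ha
  · simp
  · rw [log_div ha hb, mul_sub]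

lemma sub_le_mul_log_div {a b : ℝ} (ha : 0 ≤ a) (hb : 0 < b) : a - b ≤ a * log (a / b) := by
  rcases ha.eq_or_lt with rfl | ha
  · simpa using hb.le
  · have h := one_sub_inv_le_log_of_pos (div_pos ha hb)
    rw [inv_div] at h
    calc a - b = a * (1 - b / a) := by field_simp
      _ ≤ a * log (a / b) := mul_le_mul_of_nonneg_left h ha.le

lemma bernoulliKL_eq_sub (x : ℝ) (ht0 : t ≠ 0) (ht1 : t ≠ 1) :
    bernoulliKL x t = x * log x + (1 - x) * log (1 - x) - (x * log t + (1 - x) * log (1 - t)) := by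
  rw [bernoulliKL, mul_log_div_eq_sub x ht0, mul_log_div_eq_sub (1 - x) (sub_ne_zero.2 ht1.symm)]
  ring

lemma bernoulliKL_self (x : ℝ) : bernoulliKL x x = 0 := by
  have h : ∀ a : ℝ, log (a / a) = 0 := fun a => by
    rcases eq_or_ne a 0 with rfl | ha <;> simp [*]
  simp [bernoulliKL, h]

lemma bernoulliKL_one_sub (x t : ℝ) : bernoulliKL (1 - x) (1 - t) = bernoulliKL x t := by
  simp only [bernoulliKL, sub_sub_cancel]
  ring

lemma bernoulliKL_one_left (t : ℝ) : bernoulliKL 1 t = -log t := by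
  simp [bernoulliKL]

lemma hasDerivAt_bernoulliKL (x : ℝ) (ht0 : 0 < t) (ht1 : t < 1) :
    HasDerivAt (bernoulliKL x) ((t - x) / (t * (1 - t))) t := by
  have hlog : HasDerivAt (fun t => log t) t⁻¹ t := hasDerivAt_log ht0.ne'
  have hlog1 : HasDerivAt (fun t => log (1 - t)) (-1 / (1 - t)) t :=
    ((hasDerivAt_id t).const_sub 1).log (sub_ne_zero.2 ht1.ne')
  have hG := ((hlog.const_mul x).add (hlog1.const_mul (1 - x))).const_sub
    (x * log x + (1 - x) * log (1 - x))
  have hKG : bernoulliKL x =ᶠ[nhds t]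
      fun t => x * log x + (1 - x) * log (1 - x) - (x * log t + (1 - x) * log (1 - t)) :=
    Filter.mem_of_superset (Ioo_mem_nhds ht0 ht1) fun s hs =>
      bernoulliKL_eq_sub x hs.1.ne' hs.2.ne
  refine (hG.congr_of_eventuallyEq hKG).congr_deriv ?_
  field_simp [ht0.ne', (sub_pos.2 ht1).ne']
  ring

lemma continuousOn_bernoulliKL (hx1 : x ≤ 1) : ContinuousOn (bernoulliKL x) (Set.Ioc 0 x) := by
  rcases hx1.lt_or_eq with hx1 | rfl
  · exact fun t ht =>
      (hasDerivAt_bernoulliKL x ht.1 (ht.2.trans_lt hx1)).continuousAt.continuousWithinAt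
  · rw [show bernoulliKL 1 = fun t => -log t from funext bernoulliKL_one_left]
    exact continuousOn_log.neg.mono fun t ht => ht.1.ne'

lemma bernoulliKL_antitoneOn (hx1 : x ≤ 1) : AntitoneOn (bernoulliKL x) (Set.Ioc 0 x) := by
  refine antitoneOn_of_deriv_nonpos (convex_Ioc 0 x) (continuousOn_bernoulliKL hx1) ?_ ?_ <;>
    rw [interior_Ioc]
  · exact fun t ht =>
      (hasDerivAt_bernoulliKL x ht.1 (ht.2.trans_le hx1)).differentiableAt.differentiableWithinAt
  · intro t ht
    have ht1 : t < 1 := ht.2.trans_le hx1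
    rw [(hasDerivAt_bernoulliKL x ht.1 ht1).deriv]
    exact div_nonpos_of_nonpos_of_nonneg (by linarith [ht.2]) (by nlinarith [ht.1])

lemma bernoulliKL_monotoneOn (hx0 : 0 ≤ x) : MonotoneOn (bernoulliKL x) (Set.Ico x 1) := by
  intro p hp q hq hpq
  rw [← bernoulliKL_one_sub x p, ← bernoulliKL_one_sub x q]
  exact bernoulliKL_antitoneOn (by linarith) ⟨by linarith [hq.2], by linarith [hq.1]⟩
    ⟨by linarith [hp.2], by linarith [hp.1]⟩ (by linarith)

lemma exists_bernoulliKL_eq_of_lt {r : ℝ} (hx0 : 0 < x) (hx1 : x ≤ 1) (hr : 0 < r) :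
    ∃ a ∈ Set.Ioo 0 x, bernoulliKL x a = r := by
  -- `t₀` is chosen so that `x log (x / t₀) = r + x`; the second summand of `K` is `≥ t₀ - x`.
  set t₀ := x * exp (-(r / x + 1))
  have ht₀0 : 0 < t₀ := by positivity
  have ht₀x : t₀ < x :=
    mul_lt_of_lt_one_right hx0 (exp_lt_one_iff.2 (by nlinarith [div_pos hr hx0]))
  have hr_le : r ≤ bernoulliKL x t₀ := by
    have h1 : x * log (x / t₀) = r + x := by
      rw [div_mul_cancel_left₀ hx0.ne', ← exp_neg, log_exp]
      field_simp
    have h2 := sub_le_mul_log_div (a := 1 - x) (b := 1 - t₀) (by linarith) (by linarith)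
    rw [bernoulliKL]
    linarith
  obtain ⟨a, ha, hKa⟩ := intermediate_value_Icc' ht₀x.le
    ((continuousOn_bernoulliKL hx1).mono (Set.Icc_subset_Ioc_iff ht₀x.le |>.2 ⟨ht₀0, le_rfl⟩))
    ⟨(bernoulliKL_self x).symm ▸ hr.le, hr_le⟩
  refine ⟨a, ⟨ht₀0.trans_le ha.1, ha.2.lt_of_ne ?_⟩, hKa⟩
  rintro rfl
  exact hr.ne' (hKa.symm.trans (bernoulliKL_self a))

lemma exists_bernoulliKL_eq_of_gt {r : ℝ} (hx0 : 0 ≤ x) (hx1 : x < 1) (hr : 0 < r) :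
    ∃ b ∈ Set.Ioo x 1, bernoulliKL x b = r := by
  obtain ⟨a, ha, hKa⟩ := exists_bernoulliKL_eq_of_lt (x := 1 - x) (by linarith) (by linarith) hr
  refine ⟨1 - a, ⟨by linarith [ha.2], by linarith [ha.1]⟩, ?_⟩
  rw [← bernoulliKL_one_sub, sub_sub_cancel, hKa]

end BernoulliKL

lemma card_le_eq_sum {Ω : Type*} {n : ℕ} (U : Fin n → Ω → ℝ) (t : ℝ) :
    (fun ω => (#{i | U i ω ≤ t} : ℝ)) = ∑ i, fun ω => if U i ω ≤ t then (1 : ℝ) else 0 := by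
  ext ω
  simp [Finset.sum_apply, Finset.sum_boole]

section Chernoff

open Real

variable {Ω : Type*} [MeasurableSpace Ω] {P : Measure Ω} [IsProbabilityMeasure P] {n : ℕ}
  {U : Fin n → Ω → ℝ} {t : ℝ}

lemma mgf_ite_le {X : Ω → ℝ} (hX : Measurable X) (hXt : P.real (X ⁻¹' Set.Iic t) = t) (l : ℝ) :
    mgf (fun ω => if X ω ≤ t then (1 : ℝ) else 0) P l = 1 + t * (exp l - 1) := by
  have hE : MeasurableSet (X ⁻¹' Set.Iic t) := hX measurableSet_Iic
  have hsplit : (fun ω => exp (l * if X ω ≤ t then (1 : ℝ) else 0)) =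
      fun ω => (X ⁻¹' Set.Iic t).indicator (fun _ => exp l) ω
        + (X ⁻¹' Set.Iic t)ᶜ.indicator (fun _ => 1) ω := by
    ext ω
    by_cases h : X ω ≤ t <;> simp [h]
  rw [mgf, hsplit, integral_add ((integrable_const _).indicator hE)
    ((integrable_const _).indicator hE.compl), integral_indicator_const _ hE,
    integral_indicator_const _ hE.compl, probReal_compl_eq_one_sub hE, hXt]
  simp only [smul_eq_mul]
  ring

lemma measurable_ite_le (hmeas : ∀ i, Measurable (U i)) (i : Fin n) :
    Measurable fun ω => if U i ω ≤ t then (1 : ℝ) else 0 :=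
  measurable_const.ite ((hmeas i) measurableSet_Iic) measurable_const

lemma mgf_card_le (hmeas : ∀ i, Measurable (U i)) (hindep : iIndepFun U P)
    (hcdf : ∀ i, P.real (U i ⁻¹' Set.Iic t) = t) (l : ℝ) :
    mgf (fun ω => (#{i | U i ω ≤ t} : ℝ)) P l = (1 + t * (exp l - 1)) ^ n := by
  have hindep' : iIndepFun (fun i ω => if U i ω ≤ t then (1 : ℝ) else 0) P :=
    hindep.comp _ fun _ => measurable_const.ite measurableSet_Iic measurable_const
  rw [card_le_eq_sum, hindep'.mgf_sum (measurable_ite_le hmeas)]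
  simp [mgf_ite_le (hmeas _) (hcdf _)]

lemma integrable_exp_mul_card_le (hmeas : ∀ i, Measurable (U i)) (l : ℝ) :
    Integrable (fun ω => exp (l * #{i | U i ω ≤ t})) P := by
  refine integrable_exp_mul_of_mem_Icc (a := 0) (b := n) ?_ (ae_of_all _ fun ω => ?_)
  · rw [card_le_eq_sum, Finset.sum_fn]
    exact (Finset.measurable_sum univ fun i _ => measurable_ite_le hmeas i).aemeasurable
  · exact ⟨Nat.cast_nonneg _, by exact_mod_cast (card_filter_le _ _).trans (card_fin n).le⟩

lemma measureReal_ge_card_le_le (hmeas : ∀ i, Measurable (U i)) (hindep : iIndepFun U P)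
    (hcdf : ∀ i, P.real (U i ⁻¹' Set.Iic t) = t) {l : ℝ} (hl : 0 ≤ l) (ε : ℝ) :
    P.real {ω | ε ≤ #{i | U i ω ≤ t}} ≤ exp (-l * ε) * (1 + t * (exp l - 1)) ^ n := by
  rw [← mgf_card_le hmeas hindep hcdf l]
  exact measure_ge_le_exp_mul_mgf ε hl (integrable_exp_mul_card_le hmeas l)

lemma measureReal_card_le_le_le (hmeas : ∀ i, Measurable (U i)) (hindep : iIndepFun U P)
    (hcdf : ∀ i, P.real (U i ⁻¹' Set.Iic t) = t) {l : ℝ} (hl : l ≤ 0) (ε : ℝ) :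
    P.real {ω | #{i | U i ω ≤ t} ≤ ε} ≤ exp (-l * ε) * (1 + t * (exp l - 1)) ^ n := by
  rw [← mgf_card_le hmeas hindep hcdf l]
  exact measure_le_le_exp_mul_mgf ε hl (integrable_exp_mul_card_le hmeas l)

end Chernoff

-- `log (x (1 - t) / (t (1 - x)))` is the minimiser of the Chernoff bound for `P (n x ≤ count)`.
lemma exp_neg_mul_bernoulliKL_eq (n : ℕ) {x t : ℝ} (hx0 : 0 < x) (hx1 : x < 1) (ht0 : 0 < t)
    (ht1 : t < 1) :
    Real.exp (-Real.log (x * (1 - t) / (t * (1 - x))) * (n * x))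
        * (1 + t * (Real.exp (Real.log (x * (1 - t) / (t * (1 - x)))) - 1)) ^ n
      = Real.exp (-(n * bernoulliKL x t)) := by
  have h1x : 0 < 1 - x := by linarith
  have h1t : 0 < 1 - t := by linarith
  have hbase : 1 + t * (x * (1 - t) / (t * (1 - x)) - 1) =
      Real.exp (Real.log ((1 - t) / (1 - x))) := by
    rw [Real.exp_log (by positivity)]
    field_simp
    ring
  rw [Real.exp_log (by positivity), hbase,
    ← Real.exp_nat_mul, ← Real.exp_add, bernoulliKL_eq_sub x ht0.ne' ht1.ne,
    Real.log_div (by positivity) (by positivity), Real.log_mul hx0.ne' h1t.ne',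
    Real.log_mul ht0.ne' h1x.ne', Real.log_div h1t.ne' h1x.ne']
  ring_nf

section Tails

open Real Filter Topology

variable {Ω : Type*} [MeasurableSpace Ω] {P : Measure Ω} [IsProbabilityMeasure P] {n : ℕ}
  {U : Fin n → Ω → ℝ} {x t : ℝ}

lemma measureReal_mul_le_card_le_le_exp (hmeas : ∀ i, Measurable (U i)) (hindep : iIndepFun U P)
    (hcdf : ∀ i, P.real (U i ⁻¹' Set.Iic t) = t) (ht0 : 0 < t) (htx : t ≤ x) (hx1 : x ≤ 1) :
    P.real {ω | n * x ≤ #{i | U i ω ≤ t}} ≤ exp (-(n * bernoulliKL x t)) := by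
  rcases hx1.lt_or_eq with hx1 | rfl
  · have hl : 0 ≤ log (x * (1 - t) / (t * (1 - x))) :=
      log_nonneg ((one_le_div (by nlinarith)).2 (by nlinarith))
    rw [← exp_neg_mul_bernoulliKL_eq n (ht0.trans_le htx) hx1 ht0 (htx.trans_lt hx1)]
    exact measureReal_ge_card_le_le hmeas hindep hcdf hl _
  · -- The optimal Chernoff parameter is `l = ∞`; let `l → ∞` instead.
    have hbound : ∀ l ≥ 0, P.real {ω | (n : ℝ) * 1 ≤ #{i | U i ω ≤ t}} ≤
        (t + (1 - t) * exp (-l)) ^ n := by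
      intro l hl
      convert measureReal_ge_card_le_le hmeas hindep hcdf hl (n * 1) using 1
      rw [mul_one, mul_comm (-l), exp_nat_mul, ← mul_pow, exp_neg]
      congr 1
      field_simp
      ring
    have hlim : Tendsto (fun l => (t + (1 - t) * exp (-l)) ^ n) atTop (𝓝 (t ^ n)) := by
      simpa using ((tendsto_exp_neg_atTop_nhds_zero.const_mul (1 - t)).const_add t).pow n
    rw [bernoulliKL_one_left, mul_neg, neg_neg, exp_nat_mul, exp_log ht0]
    exact ge_of_tendsto hlim ((eventually_ge_atTop 0).mono hbound)

lemma measureReal_card_le_le_mul_le_exp (hmeas : ∀ i, Measurable (U i)) (hindep : iIndepFun U P)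
    (hcdf : ∀ i, P.real (U i ⁻¹' Set.Iic t) = t) (hx0 : 0 < x) (hxt : x ≤ t) (ht1 : t < 1) :
    P.real {ω | #{i | U i ω ≤ t} ≤ n * x} ≤ exp (-(n * bernoulliKL x t)) := by
  have hl : log (x * (1 - t) / (t * (1 - x))) ≤ 0 :=
    log_nonpos
      (div_nonneg (mul_nonneg hx0.le (by linarith)) (mul_nonneg (by linarith) (by linarith)))
      ((div_le_one (by nlinarith)).2 (by nlinarith))
  rw [← exp_neg_mul_bernoulliKL_eq n hx0 (hxt.trans_lt ht1) (hx0.trans_le hxt) ht1]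
  exact measureReal_card_le_le_le hmeas hindep hcdf hl _

end Tails

section OrderStatistic

variable {n j : ℕ}

noncomputable def orderStat (u : Fin n → ℝ) (j : ℕ) : ℝ :=
  sInf {x : ℝ | j ≤ #{i | u i ≤ x}}

lemma isLeast_orderStat (hj : 1 ≤ j) (hjn : j ≤ n) (u : Fin n → ℝ) :
    IsLeast {x : ℝ | j ≤ #{i | u i ≤ x}} (orderStat u j) := by
  set S := {x : ℝ | j ≤ #{i | u i ≤ x}}
  -- Each `x ∈ S` dominates the largest `u i ≤ x`, which lies in `S` as well.
  have h_le_mem : ∀ x ∈ S, ∃ i, u i ∈ S ∧ u i ≤ x := by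
    intro x hx
    obtain ⟨i, hi, hmax⟩ := exists_max_image {k | u k ≤ x} u
      (card_pos.1 (Nat.lt_of_lt_of_le hj hx))
    refine ⟨i, le_trans hx (card_le_card fun k hk => ?_), (mem_filter.1 hi).2⟩
    exact mem_filter.2 ⟨mem_univ k, hmax k hk⟩
  have hA : ({i | u i ∈ S} : Finset (Fin n)).Nonempty := by
    obtain ⟨i, -, hmax⟩ := exists_max_image univ u (univ_nonempty_iff.2 ⟨⟨0, by omega⟩⟩)
    refine ⟨i, mem_filter.2 ⟨mem_univ i, ?_⟩⟩
    simpa [S, filter_true_of_mem fun k _ => hmax k (mem_univ k)] using hjn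
  obtain ⟨i₀, hi₀, hmin⟩ := exists_min_image _ u hA
  have hleast : IsLeast S (u i₀) := by
    refine ⟨(mem_filter.1 hi₀).2, fun x hx => ?_⟩
    obtain ⟨i, hi, hix⟩ := h_le_mem x hx
    exact (hmin i (mem_filter.2 ⟨mem_univ i, hi⟩)).trans hix
  rwa [orderStat, hleast.csInf_eq]

lemma orderStat_le_iff (hj : 1 ≤ j) (hjn : j ≤ n) (u : Fin n → ℝ) (t : ℝ) :
    orderStat u j ≤ t ↔ j ≤ #{i | u i ≤ t} := by
  have h := isLeast_orderStat hj hjn u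
  refine ⟨fun ht => h.1.trans (card_le_card fun i hi => ?_), fun ht => h.2 ht⟩
  simp only [mem_filter, mem_univ, true_and] at hi ⊢
  exact hi.trans ht

end OrderStatistic

lemma measureReal_preimage_Iic_of_map_eq {Ω : Type*} [MeasurableSpace Ω] {P : Measure Ω}
    {X : Ω → ℝ} (hX : Measurable X) (hmap : P.map X = volume.restrict (Set.Ioc 0 1)) {t : ℝ}
    (ht : t ∈ Set.Icc 0 1) : P.real (X ⁻¹' Set.Iic t) = t := by
  rw [measureReal_def, ← Measure.map_apply hX measurableSet_Iic, hmap,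
    Measure.restrict_apply measurableSet_Iic, Set.Iic_inter_Ioc_of_le ht.2, Real.volume_Ioc,
    sub_zero, ENNReal.toReal_ofReal ht.1]

section Deviation

open Real

variable {Ω : Type*} [MeasurableSpace Ω] {P : Measure Ω} [IsProbabilityMeasure P] {n j : ℕ}
  {U : Fin n → Ω → ℝ} {s : ℝ}

lemma measure_orderStat_le_deviation (hmeas : ∀ i, Measurable (U i)) (hindep : iIndepFun U P)
    (hcdf : ∀ t ∈ Set.Icc (0 : ℝ) 1, ∀ i, P.real (U i ⁻¹' Set.Iic t) = t)
    (hj : 1 ≤ j) (hjn : j ≤ n) (hs : 0 < s) :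
    P {ω | orderStat (U · ω) j ≤ j / n ∧ s < n * bernoulliKL (j / n) (orderStat (U · ω) j)}
      ≤ ENNReal.ofReal (exp (-s)) := by
  have hn : (0 : ℝ) < n := by exact_mod_cast (by omega : 0 < n)
  have hx0 : (0 : ℝ) < j / n := div_pos (by exact_mod_cast hj) hn
  have hx1 : (j : ℝ) / n ≤ 1 := div_le_one_of_le₀ (by exact_mod_cast hjn) hn.le
  obtain ⟨a, ha, hKa⟩ := exists_bernoulliKL_eq_of_lt hx0 hx1 (div_pos hs hn)
  refine (measure_mono (t := {ω | n * (j / n : ℝ) ≤ #{i | U i ω ≤ a}}) fun ω hω => ?_).trans ?_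
  · obtain ⟨hpx, hKp⟩ := hω
    rw [Set.mem_ofPred_eq, mul_div_cancel₀ _ hn.ne', Nat.cast_le, ← orderStat_le_iff hj hjn]
    by_contra! hap
    have hKle := bernoulliKL_antitoneOn hx1 ⟨ha.1, ha.2.le⟩ ⟨ha.1.trans hap, hpx⟩ hap.le
    rw [hKa, le_div_iff₀' hn] at hKle
    linarith
  · rw [← ofReal_measureReal, ← mul_div_cancel₀ s hn.ne', ← hKa]
    exact ENNReal.ofReal_le_ofReal (measureReal_mul_le_card_le_le_exp hmeas hindep
      (hcdf a ⟨ha.1.le, ha.2.le.trans hx1⟩) ha.1 ha.2.le hx1)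

lemma measure_lt_orderStat_deviation (hmeas : ∀ i, Measurable (U i)) (hindep : iIndepFun U P)
    (hcdf : ∀ t ∈ Set.Icc (0 : ℝ) 1, ∀ i, P.real (U i ⁻¹' Set.Iic t) = t)
    (hj : 1 ≤ j) (hjn : j ≤ n) (hs : 0 < s) :
    P {ω | j / n < orderStat (U · ω) j ∧ s < n * bernoulliKL (j / n) (orderStat (U · ω) j)}
      ≤ ENNReal.ofReal (exp (-s)) := by
  have hn : (0 : ℝ) < n := by exact_mod_cast (by omega : 0 < n)
  rcases hjn.lt_or_eq with hjn' | rfl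
  · have hx1 : (j : ℝ) / n < 1 := (div_lt_one hn).2 (by exact_mod_cast hjn')
    obtain ⟨b, hb, hKb⟩ := exists_bernoulliKL_eq_of_gt (by positivity) hx1 (div_pos hs hn)
    refine (measure_mono (t := {ω | #{i | U i ω ≤ b} ≤ n * (j / n : ℝ)}) fun ω hω => ?_).trans ?_
    · obtain ⟨hxp, hKp⟩ := hω
      have hbp : b < orderStat (U · ω) j := by
        by_contra! hpb
        have hKle := bernoulliKL_monotoneOn (by positivity) ⟨hxp.le, hpb.trans_lt hb.2⟩
          ⟨hb.1.le, hb.2⟩ hpb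
        rw [hKb, le_div_iff₀' hn] at hKle
        linarith
      rw [Set.mem_ofPred_eq, mul_div_cancel₀ _ hn.ne', Nat.cast_le]
      exact (not_le.1 ((orderStat_le_iff hj hjn _ b).not.1 hbp.not_ge)).le
    · rw [← ofReal_measureReal, ← mul_div_cancel₀ s hn.ne', ← hKb]
      exact ENNReal.ofReal_le_ofReal (measureReal_card_le_le_mul_le_exp hmeas hindep
        (hcdf b ⟨(hb.1.trans' (by positivity)).le, hb.2.le⟩) (by positivity) hb.1.le hb.2)
  · -- For `j = n` the event is empty: `K(1, p) = -log p < 0` when `p > 1`.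
    refine (measure_mono (t := ∅) fun ω hω => ?_).trans (by simp)
    obtain ⟨hxp, hKp⟩ := hω
    rw [div_self hn.ne'] at hxp hKp
    rw [bernoulliKL_one_left] at hKp
    nlinarith [log_pos hxp]

end Deviation

lemma two_mul_exp_neg_le {j : ℕ} (hj : 1 ≤ j) {s : ℝ} (hs : 0 ≤ s) :
    2 * Real.exp (-s) ≤ Real.exp 1 * Real.sqrt 2 * j * Real.exp (-(1 - 1 / (j : ℝ)) * s) := by
  have hj' : (1 : ℝ) ≤ j := by exact_mod_cast hj
  have he : 2 ≤ Real.exp 1 := by linarith [Real.add_one_le_exp (1 : ℝ)]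
  have hsqrt : 1 ≤ Real.sqrt 2 := Real.one_le_sqrt.2 (by norm_num)
  refine mul_le_mul ?_ (Real.exp_le_exp.2 ?_) (Real.exp_pos _).le (by positivity)
  · nlinarith [mul_le_mul he hsqrt zero_le_one (by positivity)]
  · nlinarith [mul_nonneg (by positivity : (0 : ℝ) ≤ 1 / j) hs]

theorem stmt_6_general {Ω : Type*} [MeasurableSpace Ω] (P : Measure Ω) [IsProbabilityMeasure P]
    (n : ℕ) (U : Fin n → Ω → ℝ)
    (hmeas : ∀ i, Measurable (U i))
    (hindep : iIndepFun U P)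
    (hunif : ∀ i, Measure.map (U i) P = volume.restrict (Set.Ioc (0:ℝ) 1))
    (K : ℝ → ℝ → ℝ)
    (hK : ∀ x t, K x t = x * Real.log (x / t) + (1 - x) * Real.log ((1 - x) / (1 - t)))
    (j : ℕ) (hj2 : 2 ≤ j) (hjn : j ≤ n) (s : ℝ) (hs : 0 < s) :
    P {ω | (n : ℝ) * K ((j : ℝ) / n)
          (sInf {x : ℝ | j ≤ (univ.filter fun i : Fin n => U i ω ≤ x).card}) > s}
      ≤ ENNReal.ofReal (Real.exp 1 * Real.sqrt 2 * j * Real.exp (-(1 - 1 / (j : ℝ)) * s)) := by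
  obtain rfl : K = bernoulliKL := funext₂ hK
  have hj : 1 ≤ j := by omega
  have hcdf : ∀ t ∈ Set.Icc (0 : ℝ) 1, ∀ i, P.real (U i ⁻¹' Set.Iic t) = t :=
    fun t ht i => measureReal_preimage_Iic_of_map_eq (hmeas i) (hunif i) ht
  calc _ ≤ P {ω | orderStat (U · ω) j ≤ j / n ∧ s < n * bernoulliKL (j / n) (orderStat (U · ω) j)}
        + P {ω | j / n < orderStat (U · ω) j ∧ s < n * bernoulliKL (j / n) (orderStat (U · ω) j)} :=
      (measure_mono fun ω hω => (le_or_gt _ _).imp (⟨·, hω⟩) (⟨·, hω⟩)).trans (measure_union_le _ _)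
    _ ≤ ENNReal.ofReal (Real.exp (-s)) + ENNReal.ofReal (Real.exp (-s)) :=
      add_le_add (measure_orderStat_le_deviation hmeas hindep hcdf hj hjn hs)
        (measure_lt_orderStat_deviation hmeas hindep hcdf hj hjn hs)
    _ = ENNReal.ofReal (2 * Real.exp (-s)) := by
      rw [← ENNReal.ofReal_add (by positivity) (by positivity), two_mul]
    _ ≤ _ := ENNReal.ofReal_le_ofReal (two_mul_exp_neg_le hj hs.le)

/-- Let `p₍ⱼ₎` be the `j`-th order statistic of `n > 2` i.i.d. `Uniform(0,1)` random
variables, `2 ≤ j ≤ n`, and `K(x,t) = x log(x/t) + (1-x) log((1-x)/(1-t))`. Then for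
every `s > 0`, `P(n K(j/n, p₍ⱼ₎) > s) ≤ e √2 j e^{-(1-1/j)s}`. -/
theorem stmt_6 {Ω : Type*} [MeasurableSpace Ω] (P : Measure Ω) [IsProbabilityMeasure P]
    (n : ℕ) (hn : 2 < n) (U : Fin n → Ω → ℝ)
    (hmeas : ∀ i, Measurable (U i))
    (hindep : iIndepFun U P)
    (hunif : ∀ i, Measure.map (U i) P = volume.restrict (Set.Ioc (0:ℝ) 1))
    (K : ℝ → ℝ → ℝ)
    (hK : ∀ x t, K x t = x * Real.log (x / t) + (1 - x) * Real.log ((1 - x) / (1 - t)))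
    (j : ℕ) (hj2 : 2 ≤ j) (hjn : j ≤ n) (s : ℝ) (hs : 0 < s) :
    P {ω | (n : ℝ) * K ((j : ℝ) / n)
          (sInf {x : ℝ | j ≤ (univ.filter fun i : Fin n => U i ω ≤ x).card}) > s}
      ≤ ENNReal.ofReal (Real.exp 1 * Real.sqrt 2 * j * Real.exp (-(1 - 1 / (j : ℝ)) * s)) :=
  stmt_6_general P n U hmeas hindep hunif K hK j hj2 hjn s hs
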